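/- arXiv:2411.11516 — 2 statements merged into one kernel-verified Lean document; each statement's English description precedes it below -/
import Mathlib

section
/- Let T₁ and T₂ be two spanning trees on vertex set [n] with symmetric difference edges F = {f₁,…,f_ℓ} ⊆ T₂∖T₁ and G = {g₁,…,g_ℓ} ⊆ T₁∖T₂. Then F and G can be paired up (after reindexing) so that for every i ∈ [ℓ], the edge set T₁ ∪ {f_i} ∖ {g_i} is a spanning tree. -/
/-!
Induct on `|T₂ \ T₁|`. Given `g = ab ∈ T₁ \ T₂`, deleting `g` splits `T₁` into the components
of `a` and of `b`, and the `T₂`-path from `a` to `b` crosses between them along an edge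
`f ∈ T₂ \ T₁`. Then `T₁ - g + f` is a tree, and so is `T₂' = T₂ - f + g`, because `f` separates
`a` from `b` in `T₂`. Pair `f` with `g` and recurse on `T₁, T₂'`, whose differences are those of
`T₁, T₂` with `f` and `g` removed.
-/

namespace SimpleGraph

variable {V : Type*} {G T T' T₁ T₂ : SimpleGraph V} {a b x y : V}

theorem Reachable.reachable_or_of_sup_edge {v : V} (h : (G ⊔ edge a b).Reachable a v) :
    G.Reachable a v ∨ G.Reachable b v := by
  rw [reachable_iff_reflTransGen] at h
  induction h with
  | refl => exact .inl .rfl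
  | @tail w v _ hwv ih =>
    rcases hwv with hwv | hwv
    · exact ih.imp (·.trans hwv.reachable) (·.trans hwv.reachable)
    · rw [edge_adj] at hwv
      rcases hwv.1 with ⟨-, rfl⟩ | ⟨-, rfl⟩
      · exact .inr .rfl
      · exact .inl .rfl

theorem Connected.reachable_deleteEdges_or (hT : T.Connected) (a b v : V) :
    (T.deleteEdges {s(a, b)}).Reachable a v ∨ (T.deleteEdges {s(a, b)}).Reachable b v :=
  ((hT a v).mono le_sdiff_sup).reachable_or_of_sup_edge

theorem Connected.deleteEdges_sup_edge (hT : T.Connected)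
    (hxy : ¬(T.deleteEdges {s(a, b)}).Reachable x y) :
    (T.deleteEdges {s(a, b)} ⊔ edge x y).Connected := by
  set G := T.deleteEdges {s(a, b)}
  have hle : G ≤ G ⊔ edge x y := le_sup_left
  have hxy_reach : (G ⊔ edge x y).Reachable x y :=
    Adj.reachable (.inr ((edge_adj ..).mpr ⟨.inl ⟨rfl, rfl⟩, fun h => hxy (h ▸ .rfl)⟩))
  -- `x` and `y` lie in different components of `G`, one of `a` and one of `b`.
  have hab : (G ⊔ edge x y).Reachable a b := by
    rcases hT.reachable_deleteEdges_or a b x with hx | hx <;>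
      rcases hT.reachable_deleteEdges_or a b y with hy | hy
    · exact absurd (hx.symm.trans hy) hxy
    · exact (hx.mono hle).trans (hxy_reach.trans (hy.mono hle).symm)
    · exact (hy.mono hle).trans (hxy_reach.symm.trans (hx.mono hle).symm)
    · exact absurd (hx.symm.trans hy) hxy
  have : Nonempty V := hT.nonempty
  refine (connected_iff_exists_forall_reachable _).mpr ⟨a, fun v => ?_⟩
  rcases hT.reachable_deleteEdges_or a b v with hv | hv
  · exact hv.mono hle
  · exact hab.trans (hv.mono hle)

theorem IsTree.deleteEdges_sup_edge (hT : T.IsTree)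
    (hxy : ¬(T.deleteEdges {s(a, b)}).Reachable x y) :
    (T.deleteEdges {s(a, b)} ⊔ edge x y).IsTree :=
  ⟨hT.connected.deleteEdges_sup_edge hxy,
    (hT.isAcyclic.anti (deleteEdges_le _)).sup_edge_of_not_reachable hxy⟩

theorem IsTree.eq_of_le (hT : T.IsTree) (hT' : T'.IsTree) (h : T ≤ T') : T = T' :=
  (isTree_iff_minimal_connected.mp hT').eq_of_le hT.connected h

theorem fromEdgeSet_insert_sdiff_singleton {e : Sym2 V} (h : s(x, y) ≠ e) :
    fromEdgeSet (insert s(x, y) T.edgeSet \ {e}) = T.deleteEdges {e} ⊔ edge x y := by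
  ext u v
  have hxy : s(u, v) = s(x, y) → s(u, v) ≠ e := fun huv => huv ▸ h
  have huv : T.Adj u v → u ≠ v := Adj.ne
  simp only [edge, fromEdgeSet_adj, sup_adj, deleteEdges_adj, Set.mem_sdiff, Set.mem_insert_iff,
    Set.mem_singleton_iff, mem_edgeSet]
  tauto

theorem edgeSet_fromEdgeSet_insert_sdiff_singleton {e f : Sym2 V} (he : ¬e.IsDiag) :
    (fromEdgeSet (insert e G.edgeSet \ {f})).edgeSet = insert e G.edgeSet \ {f} := by
  refine (edgeSet_eq_iff ..).mpr ⟨rfl, Set.disjoint_left.mpr ?_⟩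
  rintro e' ⟨rfl | he', -⟩
  exacts [he, G.not_isDiag_of_mem_edgeSet he']

theorem IsTree.exists_symmetric_exchange (h₁ : T₁.IsTree) (h₂ : T₂.IsTree) {g : Sym2 V}
    (hg : g ∈ T₁.edgeSet \ T₂.edgeSet) :
    ∃ f ∈ T₂.edgeSet \ T₁.edgeSet, (fromEdgeSet (insert f T₁.edgeSet \ {g})).IsTree ∧
      (fromEdgeSet (insert g T₂.edgeSet \ {f})).IsTree := by
  classical
  induction g with | h a b =>
  obtain ⟨hab, hab₂⟩ := hg
  set G₁ := T₁.deleteEdges {s(a, b)}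
  have hnab₁ : ¬G₁.Reachable a b := isAcyclic_iff_forall_adj_isBridge.mp h₁.isAcyclic hab
  obtain ⟨p, -, hp_unique⟩ := h₂.existsUnique_path a b
  obtain ⟨⟨⟨x, y⟩, hxy⟩, hd, hx, hy⟩ := p.exists_boundary_dart {v | G₁.Reachable a v} .rfl hnab₁
  have hnxy₁ : ¬G₁.Reachable x y := fun h => hy (hx.trans h)
  have hxy_ne : s(x, y) ≠ s(a, b) := fun h => hab₂ (h ▸ hxy)
  have hxy₁ : s(x, y) ∉ T₁.edgeSet := fun h =>
    hnxy₁ (deleteEdges_adj.mpr ⟨h, hxy_ne⟩).reachable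
  have hnab₂ : ¬(T₂.deleteEdges {s(x, y)}).Reachable a b := by
    rintro h
    obtain ⟨q, hq⟩ := reachable_deleteEdges_iff_exists_walk.mp h
    rw [← hp_unique _ q.bypass_isPath] at hd
    exact hq (q.edges_bypass_subset_edges (List.mem_map_of_mem (f := Dart.edge) hd))
  refine ⟨s(x, y), ⟨hxy, hxy₁⟩, ?_, ?_⟩
  · rw [fromEdgeSet_insert_sdiff_singleton hxy_ne]
    exact h₁.deleteEdges_sup_edge hnxy₁
  · rw [fromEdgeSet_insert_sdiff_singleton hxy_ne.symm]
    exact h₂.deleteEdges_sup_edge hnab₂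

theorem IsTree.exists_bijOn_exchange (h₁ : T₁.IsTree) (h₂ : T₂.IsTree)
    (hfin : (T₂.edgeSet \ T₁.edgeSet).Finite) :
    ∃ σ : Sym2 V → Sym2 V, Set.BijOn σ (T₂.edgeSet \ T₁.edgeSet) (T₁.edgeSet \ T₂.edgeSet) ∧
      ∀ f ∈ T₂.edgeSet \ T₁.edgeSet, (fromEdgeSet (insert f T₁.edgeSet \ {σ f})).IsTree := by
  classical
  induction hn : (T₂.edgeSet \ T₁.edgeSet).ncard generalizing T₂ with
  | zero =>
    have h₂₁ : T₂ = T₁ := h₂.eq_of_le h₁ <| edgeSet_subset_edgeSet.mp <|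
      Set.sdiff_eq_empty.mp <| (Set.ncard_eq_zero hfin).mp hn
    subst h₂₁
    exact ⟨id, by simp, by simp⟩
  | succ n ih =>
    obtain ⟨g, hg⟩ : (T₁.edgeSet \ T₂.edgeSet).Nonempty := by
      refine Set.nonempty_iff_ne_empty.mpr fun h => ?_
      obtain rfl := h₁.eq_of_le h₂ (edgeSet_subset_edgeSet.mp (Set.sdiff_eq_empty.mp h))
      simp at hn
    obtain ⟨f, hf, hf₁, hf₂⟩ := h₁.exists_symmetric_exchange h₂ hg
    set T₂' := fromEdgeSet (insert g T₂.edgeSet \ {f})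
    have hE₂' : T₂'.edgeSet = insert g T₂.edgeSet \ {f} :=
      edgeSet_fromEdgeSet_insert_sdiff_singleton (T₁.not_isDiag_of_mem_edgeSet hg.1)
    have hS : T₂'.edgeSet \ T₁.edgeSet = (T₂.edgeSet \ T₁.edgeSet) \ {f} := by
      ext e
      simp only [hE₂', Set.mem_sdiff, Set.mem_insert_iff, Set.mem_singleton_iff]
      grind
    have hR : T₁.edgeSet \ T₂'.edgeSet = (T₁.edgeSet \ T₂.edgeSet) \ {g} := by
      ext e
      simp only [hE₂', Set.mem_sdiff, Set.mem_insert_iff, Set.mem_singleton_iff]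
      grind
    obtain ⟨σ, hσ, hσ_tree⟩ := ih hf₂ (hS ▸ hfin.sdiff)
      (by rw [hS, Set.ncard_sdiff_singleton_of_mem hf, hn, Nat.add_sub_cancel])
    rw [hS, hR] at hσ
    rw [hS] at hσ_tree
    refine ⟨Function.update σ f g, ?_, ?_⟩
    · have := (hσ.congr fun e he => (Function.update_of_ne he.2 g σ).symm).insert (a := f)
        (by simp)
      simpa [Set.insert_sdiff_self_of_mem hf, Set.insert_sdiff_self_of_mem hg] using this
    · intro f' hf'
      by_cases hff' : f' = f
      · subst hff'
        simpa using hf₁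
      · simpa [hff'] using hσ_tree f' ⟨hf', hff'⟩

end SimpleGraph

/-- Spanning-tree exchange lemma: if `T₁` and `T₂` are spanning trees on the vertex set
`Fin n`, then the edges of `T₂ \ T₁` and of `T₁ \ T₂` can be paired up by a bijection `σ`
such that for every edge `f` of `T₂ \ T₁`, replacing the edge `σ f` of `T₁` by `f`
again yields a spanning tree. -/
theorem spanning_tree_exchange (n : ℕ) (T₁ T₂ : SimpleGraph (Fin n))
    (h₁ : T₁.IsTree) (h₂ : T₂.IsTree) :
    ∃ σ : (T₂.edgeSet \ T₁.edgeSet : Set (Sym2 (Fin n))) ≃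
          (T₁.edgeSet \ T₂.edgeSet : Set (Sym2 (Fin n))),
      ∀ f : (T₂.edgeSet \ T₁.edgeSet : Set (Sym2 (Fin n))),
        (SimpleGraph.fromEdgeSet
          (insert (f : Sym2 (Fin n)) T₁.edgeSet \ {(σ f : Sym2 (Fin n))})).IsTree := by
  obtain ⟨σ, hσ, hσ_tree⟩ := h₁.exists_bijOn_exchange h₂ (Set.toFinite _)
  exact ⟨hσ.equiv σ, fun f => hσ_tree f f.2⟩
end

section
/- For the two 3-variate zero-mean Gaussians R₁ with covariance Σ₁ = [[1, 0, √t],[0, 2, 1],[√t, 1, 2+t]] and R₂ with covariance Σ₂ = [[1, √t, 0],[√t, 2+t, 1],[0, 1, 2]] (t = ε/n ∈ (0,1)), both determinants equal 3 and D_KL(R₁‖R₂) = D_KL(R₂‖R₁) = t. -/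
set_option maxHeartbeats 1000000


noncomputable section

/-- KL divergence between the zero-mean trivariate Gaussians `N(0,A)` and `N(0,B)`. -/
def klGauss3 (A B : Matrix (Fin 3) (Fin 3) ℝ) : ℝ :=
  (1 / 2) * ((B⁻¹ * A).trace - 3 + Real.log (B.det / A.det))

/-- For the two trivariate zero-mean Gaussians with covariances
`Σ₁ = [[1, 0, √t], [0, 2, 1], [√t, 1, 2+t]]` and `Σ₂ = [[1, √t, 0], [√t, 2+t, 1], [0, 1, 2]]`
with `t = ε/n ∈ (0,1)`, both determinants equal `3` and the KL divergence in each
direction equals `t`. -/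
theorem realizable_kl_hard_instances (t : ℝ) (ht : t ∈ Set.Ioo (0 : ℝ) 1) :
    let S1 : Matrix (Fin 3) (Fin 3) ℝ :=
      !![1, 0, Real.sqrt t; 0, 2, 1; Real.sqrt t, 1, 2 + t]
    let S2 : Matrix (Fin 3) (Fin 3) ℝ :=
      !![1, Real.sqrt t, 0; Real.sqrt t, 2 + t, 1; 0, 1, 2]
    S1.det = 3 ∧ S2.det = 3 ∧ klGauss3 S1 S2 = t ∧ klGauss3 S2 S1 = t := by
  obtain ⟨ht0, ht1⟩ := ht
  intro S1 S2
  have hs : Real.sqrt t * Real.sqrt t = t := Real.mul_self_sqrt ht0.le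
  have hdet1 : S1.det = 3 := by
    simp [S1, Matrix.det_fin_three]
    nlinarith [hs]
  have hdet2 : S2.det = 3 := by
    simp [S2, Matrix.det_fin_three]
    nlinarith [hs]
  have hinv1 : S1⁻¹ = (3:ℝ)⁻¹ • !![3+2*t, Real.sqrt t, -2*Real.sqrt t;
      Real.sqrt t, 2, -1; -2*Real.sqrt t, -1, 2] := by
    apply Matrix.inv_eq_right_inv
    ext i j
    fin_cases i <;> fin_cases j <;>
      simp [S1, Matrix.mul_apply, Fin.sum_univ_three, Matrix.one_apply] <;> nlinarith [hs]
  have hinv2 : S2⁻¹ = (3:ℝ)⁻¹ • !![3+2*t, -2*Real.sqrt t, Real.sqrt t;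
      -2*Real.sqrt t, 2, -1; Real.sqrt t, -1, 2] := by
    apply Matrix.inv_eq_right_inv
    ext i j
    fin_cases i <;> fin_cases j <;>
      simp [S2, Matrix.mul_apply, Fin.sum_univ_three, Matrix.one_apply] <;> nlinarith [hs]
  refine ⟨hdet1, hdet2, ?_, ?_⟩
  · rw [klGauss3, hinv2, hdet1, hdet2, Matrix.smul_mul, Matrix.trace_smul]
    have h3 : (3:ℝ)/3 = 1 := by norm_num
    rw [h3, Real.log_one]
    simp [S1, Matrix.trace_fin_three, Matrix.mul_apply, Fin.sum_univ_three]
    nlinarith [hs]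
  · rw [klGauss3, hinv1, hdet1, hdet2, Matrix.smul_mul, Matrix.trace_smul]
    have h3 : (3:ℝ)/3 = 1 := by norm_num
    rw [h3, Real.log_one]
    simp [S2, Matrix.trace_fin_three, Matrix.mul_apply, Fin.sum_univ_three]
    nlinarith [hs]
end
end
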